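/- arXiv:1610.07988 — 5 statements merged into one kernel-verified Lean document; each statement's English description precedes it below -/
import Mathlib

section
/- Let G be a graph without a perfect matching (i.e., without a matching of size ⌊|V(G)|/2⌋). Let v be a vertex isolated by some maximum matching, and let B(v) be the set of vertices w ≠ v such that some maximum matching of G isolates both v and w. If B(v) is nonempty, then |N(B(v))| < |B(v)|, where N(S) denotes the set of vertices outside S adjacent to some vertex of S. -/
open Finset Set

/-- `M` is a maximum matching of `G`: a matching covering as many vertices as possible. -/
def SimpleGraph.IsMaximumMatching {V : Type*} [Fintype V] (G : SimpleGraph V)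
    (M : G.Subgraph) : Prop :=
  M.IsMatching ∧ ∀ M' : G.Subgraph, M'.IsMatching → M'.verts.ncard ≤ M.verts.ncard

/-!
Fix a maximum matching `M` missing `v`, and let `u ∉ B(v)` be adjacent to `w ∈ B(v)`. Then `u` is
covered by `M` and its partner `x` lies in `B(v)`. Indeed, take a maximum matching `M'` missing `v`
and `w`; if `w` is covered by `M`, with partner `t`, and `s` is the `M'`-partner of `t`, replacing
`ts` by `tw` in `M'` gives a maximum matching missing `v` and `s` and closer to `M`. By induction we
reach a maximum matching missing `v` together with `u` or `x`, or one missing `w` and containing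
`ux`, in which swapping `ux` for `uw` frees `x`.

So `u ↦ x` maps `N(B(v))` injectively into the vertices of `B(v)` covered by `M`. As `G` has no
perfect matching, `M` misses a second vertex, which lies in `B(v)`, whence `|N(B(v))| < |B(v)|`.
-/
lemma Set.ncard_insert_sdiff_lt {α : Type*} [Finite α] {s t : Set α} {a b : α} (ha : a ∈ t)
    (hb : b ∈ s \ t) : (insert a (s \ {b}) \ t).ncard < (s \ t).ncard := by
  have hsub : insert a (s \ {b}) \ t ⊆ (s \ t) \ {b} := by
    rintro e ⟨rfl | ⟨hes, heb⟩, het⟩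
    · exact absurd ha het
    · exact ⟨⟨hes, het⟩, heb⟩
  exact (Set.ncard_le_ncard hsub).trans_lt (Set.ncard_sdiff_singleton_lt_of_mem hb)

namespace SimpleGraph

namespace Subgraph.IsMatching

variable {V : Type*} {G : SimpleGraph V} {M N : G.Subgraph} {a b c x y : V}

lemma deleteVerts_pair_adj_iff (hN : N.IsMatching) (hab : N.Adj a b) :
    (N.deleteVerts {a, b}).Adj x y ↔ N.Adj x y ∧ s(x, y) ≠ s(a, b) := by
  simp only [deleteVerts_adj, Set.mem_insert_iff, Set.mem_singleton_iff, ne_eq, Sym2.eq_iff]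
  constructor
  · rintro ⟨-, hx, -, hy, hxy⟩
    exact ⟨hxy, by tauto⟩
  · rintro ⟨hxy, hne⟩
    refine ⟨hxy.fst_mem, ?_, hxy.snd_mem, ?_, hxy⟩ <;> rintro (h | h) <;> subst h
    · exact hne (.inl ⟨rfl, hN.eq_of_adj_left hxy hab⟩)
    · exact hne (.inr ⟨rfl, hN.eq_of_adj_left hxy hab.symm⟩)
    · exact hne (.inr ⟨hN.eq_of_adj_right hxy hab.symm, rfl⟩)
    · exact hne (.inl ⟨hN.eq_of_adj_right hxy hab, rfl⟩)

lemma deleteVerts_pair (hN : N.IsMatching) (hab : N.Adj a b) :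
    (N.deleteVerts {a, b}).IsMatching := by
  rintro y ⟨hy, hyab⟩
  obtain ⟨z, hz, huniq⟩ := hN hy
  refine ⟨z, (hN.deleteVerts_pair_adj_iff hab).2 ⟨hz, fun h => hyab ?_⟩,
    fun z' hz' => huniq z' ((hN.deleteVerts_pair_adj_iff hab).1 hz').1⟩
  exact Sym2.mem_iff.1 (h ▸ Sym2.mem_mk_left y z)

lemma exists_swap (hN : N.IsMatching) (hab : N.Adj a b) (hc : c ∉ N.verts) (hac : G.Adj a c) :
    ∃ N' : G.Subgraph, N'.IsMatching ∧ N'.verts = insert c (N.verts \ {b}) ∧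
      N'.edgeSet = insert s(a, c) (N.edgeSet \ {s(a, b)}) := by
  refine ⟨N.deleteVerts {a, b} ⊔ G.subgraphOfAdj hac,
    (hN.deleteVerts_pair hab).sup (.subgraphOfAdj hac) ?_, ?_, ?_⟩
  · rw [support_subgraphOfAdj, Set.disjoint_right]
    rintro z (rfl | rfl) hz <;> have hz' := support_subset_verts _ hz
    · exact hz'.2 (Set.mem_insert _ _)
    · exact hc hz'.1
  · have ha := hab.fst_mem
    have hab' := hab.ne
    ext z
    simp only [verts_sup, deleteVerts_verts, subgraphOfAdj_verts, Set.mem_union, Set.mem_sdiff,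
      Set.mem_insert_iff, Set.mem_singleton_iff]
    by_cases hza : z = a
    · subst hza; tauto
    · tauto
  · ext e
    induction e using Sym2.ind with
    | _ x y =>
      rw [edgeSet_sup, edgeSet_subgraphOfAdj, Set.union_singleton]
      simp only [Set.mem_insert_iff, Set.mem_sdiff, Set.mem_singleton_iff, Subgraph.mem_edgeSet]
      rw [hN.deleteVerts_pair_adj_iff hab]

lemma exists_ne_notMem_verts [Fintype V] (hM : M.IsMatching)
    (h : M.verts.ncard ≠ 2 * (Fintype.card V / 2)) (v : V) : ∃ w, w ≠ v ∧ w ∉ M.verts := by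
  have heven : Even M.verts.ncard := by
    classical
    rw [Set.ncard_eq_toFinset_card']
    exact hM.even_card
  have hle : M.verts.ncard ≤ Fintype.card V := by
    simpa using Set.ncard_le_ncard (Set.subset_univ M.verts)
  have hcompl : 1 < M.vertsᶜ.ncard := by
    rw [Set.ncard_compl, Nat.card_eq_fintype_card]
    obtain ⟨k, hk⟩ := heven
    omega
  obtain ⟨w, hw, hwv⟩ := Set.exists_ne_of_one_lt_ncard hcompl v
  exact ⟨w, hwv, hw⟩

lemma ncard_lt_of_forall_exists_adj [Finite V] (hM : M.IsMatching) {S T : Set V} {w : V}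
    (hT : ∀ u ∈ T, ∃ x ∈ S, M.Adj u x) (hwS : w ∈ S) (hwM : w ∉ M.verts) :
    T.ncard < S.ncard := by
  choose! f hf using fun x (hx : x ∈ M.verts) => (hM hx).exists
  have hTsub : T ⊆ f '' (S \ {w}) := by
    intro u hu
    obtain ⟨x, hxS, hux⟩ := hT u hu
    exact ⟨x, ⟨hxS, fun hxw => hwM (Set.mem_singleton_iff.1 hxw ▸ hux.snd_mem)⟩,
      hM.eq_of_adj_left (hf x hux.snd_mem) hux.symm⟩
  calc T.ncard ≤ (f '' (S \ {w})).ncard := Set.ncard_le_ncard hTsub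
    _ ≤ (S \ {w}).ncard := Set.ncard_image_le
    _ < S.ncard := Set.ncard_sdiff_singleton_lt_of_mem hwS

end Subgraph.IsMatching

namespace IsMaximumMatching

variable {V : Type*} [Fintype V] {G : SimpleGraph V} {M M' N : G.Subgraph} {a b c u v w x : V}

lemma of_ncard_eq (hM : G.IsMaximumMatching M) (hN : N.IsMatching)
    (h : N.verts.ncard = M.verts.ncard) : G.IsMaximumMatching N :=
  ⟨hN, fun K hK => (hM.2 K hK).trans h.ge⟩

lemma not_adj_of_notMem (hM : G.IsMaximumMatching M) (ha : a ∉ M.verts) (hb : b ∉ M.verts) :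
    ¬G.Adj a b := by
  intro hab
  have hdisj : Disjoint M.verts {a, b} := by
    rw [Set.disjoint_right]
    rintro z (rfl | rfl) <;> assumption
  have hle := hM.2 _ <| hM.1.sup (.subgraphOfAdj hab) <| by
    rwa [hM.1.support_eq_verts, support_subgraphOfAdj]
  rw [Subgraph.verts_sup, subgraphOfAdj_verts, Set.ncard_union_eq hdisj,
    Set.ncard_pair hab.ne] at hle
  omega

lemma exists_swap (hN : G.IsMaximumMatching N) (hab : N.Adj a b) (hc : c ∉ N.verts)
    (hac : G.Adj a c) :
    ∃ N' : G.Subgraph, G.IsMaximumMatching N' ∧ N'.verts = insert c (N.verts \ {b}) ∧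
      N'.edgeSet = insert s(a, c) (N.edgeSet \ {s(a, b)}) := by
  obtain ⟨N', hN', hverts, hedges⟩ := hN.1.exists_swap hab hc hac
  refine ⟨N', hN.of_ncard_eq hN' ?_, hverts, hedges⟩
  rw [hverts, Set.ncard_insert_of_notMem fun h => hc h.1,
    Set.ncard_sdiff_singleton_add_one hab.snd_mem]

/-- The clause `M.edgeSet ∩ M'.edgeSet ⊆ N.edgeSet` is the strengthening that carries the
induction on the number of edges of `M'` outside `M`. -/
theorem exists_exchange (hM : G.IsMaximumMatching M) (hvM : v ∉ M.verts) (hux : M.Adj u x)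
    (hM' : G.IsMaximumMatching M') (hvM' : v ∉ M'.verts) (hwM' : w ∉ M'.verts)
    (huw : u ≠ w) (hxw : x ≠ w) :
    ∃ N : G.Subgraph, G.IsMaximumMatching N ∧ v ∉ N.verts ∧
      (u ∉ N.verts ∨ x ∉ N.verts ∨
        (w ∉ N.verts ∧ N.Adj u x ∧ M.edgeSet ∩ M'.edgeSet ⊆ N.edgeSet)) := by
  induction hk : (M'.edgeSet \ M.edgeSet).ncard using Nat.strong_induction_on
    generalizing M' w with
  | _ k ih =>
  by_cases hwM : w ∉ M.verts
  · exact ⟨M, hM, hvM, .inr <| .inr ⟨hwM, hux, Set.inter_subset_left⟩⟩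
  obtain ⟨t, hwt, -⟩ := hM.1 (not_not.1 hwM)
  have hwv : w ≠ v := fun h => hvM (h ▸ hwt.fst_mem)
  have htM' : t ∈ M'.verts := by
    by_contra htM'
    exact hM'.not_adj_of_notMem hwM' htM' (M.adj_sub hwt)
  obtain ⟨s, hts, -⟩ := hM'.1 htM'
  have hsw : s ≠ w := fun h => hwM' (h ▸ hts.snd_mem)
  have hsv : s ≠ v := fun h => hvM' (h ▸ hts.snd_mem)
  have hts_notMem : s(t, s) ∉ M.edgeSet := fun h => hsw (hM.1.eq_of_adj_left h hwt.symm)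
  -- trading `ts` for `tw` in `M'` frees `s` and brings `M'` one edge closer to `M`
  obtain ⟨M'', hM'', hverts'', hedges''⟩ := hM'.exists_swap hts hwM' (M.adj_sub hwt.symm)
  have hvM'' : v ∉ M''.verts := by simp [hverts'', hwv.symm, hvM']
  have hsM'' : s ∉ M''.verts := by simp [hverts'', hsw]
  by_cases hsu : s = u
  · exact ⟨M'', hM'', hvM'', .inl (hsu ▸ hsM'')⟩
  by_cases hsx : s = x
  · exact ⟨M'', hM'', hvM'', .inr <| .inl (hsx ▸ hsM'')⟩
  have hlt : (M''.edgeSet \ M.edgeSet).ncard < k := by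
    rw [← hk, hedges'']
    exact Set.ncard_insert_sdiff_lt hwt.symm ⟨hts, hts_notMem⟩
  obtain ⟨N, hN, hvN, huN | hxN | ⟨hsN, huxN, hsub⟩⟩ :=
    ih _ hlt hM'' hvM'' hsM'' (Ne.symm hsu) (Ne.symm hsx) rfl
  · exact ⟨N, hN, hvN, .inl huN⟩
  · exact ⟨N, hN, hvN, .inr <| .inl hxN⟩
  have htwN : N.Adj t w := hsub ⟨hwt.symm, by rw [hedges'']; exact Set.mem_insert _ _⟩
  obtain ⟨N', hN', hvertsN', hedgesN'⟩ := hN.exists_swap htwN hsN (M'.adj_sub hts)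
  refine ⟨N', hN', by simp [hvertsN', hsv.symm, hvN],
    .inr <| .inr ⟨by simp [hvertsN', hsw.symm], ?_, ?_⟩⟩
  · rw [← Subgraph.mem_edgeSet, hedgesN']
    exact .inr ⟨huxN, by simp [huw, hxw]⟩
  · rintro e ⟨heM, heM'⟩
    rw [hedgesN']
    refine .inr ⟨hsub ⟨heM, ?_⟩, fun he => hwM' ?_⟩
    · rw [hedges'']
      exact .inr ⟨heM', fun he => hts_notMem (he ▸ heM)⟩
    · exact Subgraph.mem_verts_of_mem_edge heM' (he ▸ Sym2.mem_mk_right t w)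

end IsMaximumMatching

variable {V : Type*} [Fintype V]

/-- The set `B(v)`. -/
def isolatedWith (G : SimpleGraph V) (v : V) : Set V :=
  {w | w ≠ v ∧ ∃ M : G.Subgraph, G.IsMaximumMatching M ∧ v ∉ M.verts ∧ w ∉ M.verts}

variable {G : SimpleGraph V} {M : G.Subgraph} {u v w : V}

theorem IsMaximumMatching.exists_adj_mem_isolatedWith (hM : G.IsMaximumMatching M)
    (hv : v ∉ M.verts) (hw : w ∈ G.isolatedWith v) (hwu : G.Adj w u)
    (hu : u ∉ G.isolatedWith v) : ∃ x ∈ G.isolatedWith v, M.Adj u x := by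
  obtain ⟨hwv, M', hM', hvM', hwM'⟩ := hw
  have huv : u ≠ v := by
    rintro rfl
    exact hM'.not_adj_of_notMem hwM' hvM' hwu
  have huM : u ∈ M.verts := by
    by_contra huM
    exact hu ⟨huv, M, hM, hv, huM⟩
  obtain ⟨x, hux, -⟩ := hM.1 huM
  have hxv : x ≠ v := fun h => hv (h ▸ hux.snd_mem)
  by_cases hxw : x = w
  · exact ⟨x, hxw ▸ ⟨hwv, M', hM', hvM', hwM'⟩, hux⟩
  obtain ⟨N, hN, hvN, huN | hxN | ⟨hwN, huxN, -⟩⟩ :=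
    hM.exists_exchange hv hux hM' hvM' hwM' hwu.ne' hxw
  · exact absurd ⟨huv, N, hN, hvN, huN⟩ hu
  · exact ⟨x, ⟨hxv, N, hN, hvN, hxN⟩, hux⟩
  · obtain ⟨N', hN', hverts', -⟩ := hN.exists_swap huxN hwN hwu.symm
    exact ⟨x, ⟨hxv, N', hN', by simp [hverts', hwv.symm, hvN], by simp [hverts', hxw]⟩, hux⟩

end SimpleGraph

theorem stmt_1_general {V : Type*} [Fintype V] (G : SimpleGraph V)
    (hnoPM : ¬∃ M : G.Subgraph, M.IsMatching ∧
      M.verts.ncard = 2 * (Fintype.card V / 2))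
    (v : V) (Mv : G.Subgraph) (hMv : G.IsMaximumMatching Mv) (hv : v ∉ Mv.verts)
    (B : Set V)
    (hB : B = {w | w ≠ v ∧ ∃ M : G.Subgraph, G.IsMaximumMatching M ∧
      v ∉ M.verts ∧ w ∉ M.verts}) :
    ({u | u ∉ B ∧ ∃ w ∈ B, G.Adj w u} : Set V).ncard < B.ncard := by
  subst hB
  obtain ⟨w₀, hw₀v, hw₀⟩ := hMv.1.exists_ne_notMem_verts (fun h => hnoPM ⟨Mv, hMv.1, h⟩) v
  refine hMv.1.ncard_lt_of_forall_exists_adj (w := w₀) ?_ ⟨hw₀v, Mv, hMv, hv, hw₀⟩ hw₀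
  rintro u ⟨hu, w, hw, hwu⟩
  exact hMv.exists_adj_mem_isolatedWith hv hw hwu hu

theorem stmt_1 {V : Type*} [Fintype V] (G : SimpleGraph V)
    (hnoPM : ¬∃ M : G.Subgraph, M.IsMatching ∧
      M.verts.ncard = 2 * (Fintype.card V / 2))
    (v : V) (Mv : G.Subgraph) (hMv : G.IsMaximumMatching Mv) (hv : v ∉ Mv.verts)
    (B : Set V)
    (hB : B = {w | w ≠ v ∧ ∃ M : G.Subgraph, G.IsMaximumMatching M ∧
      v ∉ M.verts ∧ w ∉ M.verts})
    (hBne : B.Nonempty) :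
    ({u | u ∉ B ∧ ∃ w ∈ B, G.Adj w u} : Set V).ncard < B.ncard :=
  stmt_1_general G hnoPM v Mv hMv hv B hB
end

section
/- For all t ∈ (0, ∞), (1 + t)·(√(1/2) + log(e(1 + 1/t))) ≥ 4. -/
open Real

theorem stmt_4 (t : ℝ) (ht : 0 < t) :
    (1 + t) * (Real.sqrt (1 / 2) + Real.log (Real.exp 1 * (1 + 1 / t))) ≥ 4 := by
  have ht1 : (0:ℝ) < 1 + t := by linarith
  have hy : (0:ℝ) < 1 + 1/t := by positivity
  have hlog1 : Real.log (Real.exp 1 * (1 + 1/t)) = 1 + Real.log (1 + 1/t) := by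
    rw [Real.log_mul (Real.exp_pos 1).ne' hy.ne', Real.log_exp]
  have h2 : Real.log (4 * t / (1 + t)) ≤ 4 * t / (1 + t) - 1 :=
    Real.log_le_sub_one_of_pos (by positivity)
  have h3 : Real.log (4 * t / (1 + t)) = Real.log 4 - Real.log (1 + 1/t) := by
    rw [show 4 * t / (1 + t) = 4 / (1 + 1/t) by field_simp; ring,
      Real.log_div (by norm_num) hy.ne']
  have hs : Real.sqrt (1/2) ≥ 0.7 := by
    have : (0.7:ℝ) = Real.sqrt 0.49 := by
      rw [show (0.49:ℝ) = 0.7^2 by norm_num, Real.sqrt_sq (by norm_num)]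
    rw [ge_iff_le, this]
    exact Real.sqrt_le_sqrt (by norm_num)
  have hl2 : Real.log 4 = 2 * Real.log 2 := by
    rw [show (4:ℝ) = 2^2 by norm_num, Real.log_pow]; push_cast; ring
  have hl2' : Real.log 2 > 0.6931471803 := Real.log_two_gt_d9
  have hcancel : (1 + t) * (4 * t / (1 + t)) = 4 * t := by
    field_simp
  have hL : Real.log (1 + 1/t) ≥ Real.log 4 + 1 - 4 * t / (1 + t) := by linarith
  rw [hlog1]
  nlinarith [mul_le_mul_of_nonneg_left hL ht1.le, hcancel, hs, hl2, hl2',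
    mul_le_mul_of_nonneg_left (show Real.sqrt (1/2) + 1 + Real.log (1+1/t) ≥ Real.sqrt (1/2) + Real.log 4 + 2 - 4*t/(1+t) by linarith) ht1.le]
end

section
/- Let X₀, X₁, ..., Xₙ be real random variables with X₀ fixed, and suppose there exist positive reals c₁,...,cₙ and b₁,...,bₙ such that |Xₖ - Xₖ₋₁| ≤ cₖ almost surely and E[Xₖ - Xₖ₋₁ | X₀,...,Xₖ₋₁] ≤ bₖ for each 1 ≤ k ≤ n. Then for every x > 0, P(∃ t, 0 ≤ t ≤ n, X_t - X₀ > Σ_{k=1}^{t} bₖ + x) ≤ exp(-x² / (2 Σ_{k=1}^{n} cₖ²)). -/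
open MeasureTheory Finset Real

/-!
For `l ≥ 0` the process `exp (l (X t - X 0 - ∑ b) - l² ∑ c² / 2)` is a nonnegative
supermartingale: conditionally on the past, an increment `D` with `|D| ≤ c` and conditional mean
at most `b` satisfies `E[exp (l D)] ≤ cosh (l c) + (b / c) sinh (l c) ≤ exp (l b + l² c² / 2)`,
by convexity of `exp` on `[-l c, l c]`. Ville's maximal inequality (optional stopping at the first
time the process exceeds a level) bounds the probability of the event by
`exp (-(l x - l² ∑ c² / 2))`, and `l = x / ∑ c²` gives the claim.
-/

namespace Real

lemma sinh_le_mul_exp_half_sq {s : ℝ} (hs : 0 ≤ s) : sinh s ≤ s * exp (s ^ 2 / 2) := by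
  rw [sinh_eq_tsum, exp_eq_exp_ℝ, NormedSpace.exp_eq_tsum ℝ, ← tsum_mul_left]
  refine s.hasSum_sinh.summable.tsum_le_tsum (fun i ↦ ?_)
    ((NormedSpace.expSeries_summable' (s ^ 2 / 2)).mul_left s)
  have hfact : 2 ^ i * i.factorial ≤ (2 * i + 1).factorial :=
    (Nat.two_pow_mul_factorial_le_factorial_two_mul i).trans (Nat.factorial_le (by omega))
  calc s ^ (2 * i + 1) / (2 * i + 1).factorial
        ≤ s ^ (2 * i + 1) / (2 ^ i * i.factorial : ℕ) := by gcongr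
    _ = s * ((i.factorial : ℝ)⁻¹ • (s ^ 2 / 2) ^ i) := by
        rw [smul_eq_mul, div_pow, ← pow_mul, pow_succ]; push_cast; field_simp

lemma exp_mul_le_cosh_add_div_mul_sinh (l : ℝ) {c d : ℝ} (hc : 0 < c) (hd : |d| ≤ c) :
    exp (l * d) ≤ cosh (l * c) + d / c * sinh (l * c) := by
  obtain ⟨hd₁, hd₂⟩ := abs_le.mp hd
  have hw₁ : 0 ≤ (c - d) / (2 * c) := div_nonneg (by linarith) (by positivity)
  have hw₂ : 0 ≤ (c + d) / (2 * c) := div_nonneg (by linarith) (by positivity)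
  have key := convexOn_exp.2 (Set.mem_univ (-(l * c))) (Set.mem_univ (l * c)) hw₁ hw₂
    (by field_simp; ring)
  simp only [smul_eq_mul] at key
  calc exp (l * d) = exp ((c - d) / (2 * c) * -(l * c) + (c + d) / (2 * c) * (l * c)) := by
        congr 1; field_simp; ring
    _ ≤ _ := key
    _ = cosh (l * c) + d / c * sinh (l * c) := by rw [cosh_eq, sinh_eq]; field_simp; ring

lemma cosh_add_div_mul_sinh_le_exp {l b c : ℝ} (hl : 0 ≤ l) (hb : 0 ≤ b) (hc : 0 < c) :
    cosh (l * c) + b / c * sinh (l * c) ≤ exp (l * b + l ^ 2 * c ^ 2 / 2) := by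
  have hsinh : b / c * sinh (l * c) ≤ l * b * exp (l ^ 2 * c ^ 2 / 2) := calc
    b / c * sinh (l * c) ≤ b / c * (l * c * exp ((l * c) ^ 2 / 2)) := by
      gcongr; exact sinh_le_mul_exp_half_sq (by positivity)
    _ = l * b * exp (l ^ 2 * c ^ 2 / 2) := by field_simp
  calc cosh (l * c) + b / c * sinh (l * c)
      ≤ (1 + l * b) * exp (l ^ 2 * c ^ 2 / 2) := by
        have := cosh_le_exp_half_sq (l * c)
        rw [mul_pow] at this
        linarith
    _ ≤ exp (l * b) * exp (l ^ 2 * c ^ 2 / 2) := by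
        gcongr; linarith [add_one_le_exp (l * b)]
    _ = exp (l * b + l ^ 2 * c ^ 2 / 2) := (exp_add _ _).symm

lemma exp_neg_sq_div_eq_inv (x S : ℝ) :
    exp (-x ^ 2 / (2 * S)) = (exp (x / S * x - (x / S) ^ 2 / 2 * S))⁻¹ := by
  rw [← exp_neg]
  rcases eq_or_ne S 0 with rfl | hS
  · simp
  · congr 1; field_simp; ring

end Real

section

variable {Ω : Type*} {m mΩ : MeasurableSpace Ω} {μ : Measure Ω} [IsFiniteMeasure μ]

lemma integrable_exp_mul_of_abs_le {D : Ω → ℝ} {c : ℝ} (hD : AEStronglyMeasurable D μ)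
    (hbdd : ∀ᵐ ω ∂μ, |D ω| ≤ c) (l : ℝ) : Integrable (fun ω ↦ exp (l * D ω)) μ := by
  refine Integrable.of_bound (continuous_exp.comp_aestronglyMeasurable (hD.const_mul l))
    (exp (|l| * c)) ?_
  filter_upwards [hbdd] with ω hω
  rw [norm_of_nonneg (exp_nonneg _), exp_le_exp]
  calc l * D ω ≤ |l * D ω| := le_abs_self _
    _ = |l| * |D ω| := abs_mul _ _
    _ ≤ |l| * c := by gcongr

/-- A conditional Hoeffding lemma. -/
lemma condExp_exp_mul_le (hm : m ≤ mΩ) {D : Ω → ℝ} {b c l : ℝ} (hD : AEStronglyMeasurable D μ)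
    (hl : 0 ≤ l) (hb : 0 ≤ b) (hc : 0 < c) (hbdd : ∀ᵐ ω ∂μ, |D ω| ≤ c)
    (hcond : μ[D|m] ≤ᵐ[μ] fun _ ↦ b) :
    μ[fun ω ↦ exp (l * D ω)|m] ≤ᵐ[μ] fun _ ↦ exp (l * b + l ^ 2 * c ^ 2 / 2) := by
  have hDint : Integrable D μ := Integrable.of_bound hD c (by simpa using hbdd)
  set r := sinh (l * c) / c
  have hr : 0 ≤ r := div_nonneg (sinh_nonneg_iff.2 (by positivity)) hc.le
  have hchord : (fun ω ↦ exp (l * D ω)) ≤ᵐ[μ] (fun _ ↦ cosh (l * c)) + r • D := by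
    filter_upwards [hbdd] with ω hω
    have := exp_mul_le_cosh_add_div_mul_sinh l hc hω
    simp only [Pi.add_apply, Pi.smul_apply, smul_eq_mul, r]
    linarith [show D ω / c * sinh (l * c) = sinh (l * c) / c * D ω by ring]
  have hlin : μ[(fun _ ↦ cosh (l * c)) + r • D|m] =ᵐ[μ] (fun _ ↦ cosh (l * c)) + r • μ[D|m] := by
    refine (condExp_add (integrable_const _) (hDint.smul r) m).trans ?_
    rw [condExp_const hm]
    exact (Filter.EventuallyEq.refl _ _).add (condExp_smul r D m)
  filter_upwards [condExp_mono (m := m) (integrable_exp_mul_of_abs_le hD hbdd l)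
    ((integrable_const _).add (hDint.smul r)) hchord, hlin, hcond] with ω h₁ h₂ h₃
  calc μ[fun ω ↦ exp (l * D ω)|m] ω ≤ cosh (l * c) + r * μ[D|m] ω := by simpa [h₂] using h₁
    _ ≤ cosh (l * c) + b / c * sinh (l * c) := by
        linarith [mul_le_mul_of_nonneg_left h₃ hr, show r * b = b / c * sinh (l * c) by ring]
    _ ≤ exp (l * b + l ^ 2 * c ^ 2 / 2) := cosh_add_div_mul_sinh_le_exp hl hb hc

section Supermartingale

variable {𝒢 : Filtration ℕ mΩ}

theorem supermartingale_min_of_condExp_le {M : ℕ → Ω → ℝ} {n : ℕ} (hadp : StronglyAdapted 𝒢 M)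
    (hint : ∀ i ≤ n, Integrable (M i) μ) (hstep : ∀ i < n, μ[M (i + 1)|𝒢 i] ≤ᵐ[μ] M i) :
    Supermartingale (fun t ↦ M (min t n)) 𝒢 μ := by
  refine supermartingale_nat (fun t ↦ (hadp _).mono (𝒢.mono (min_le_left t n)))
    (fun t ↦ hint _ (min_le_right t n)) fun i ↦ ?_
  rcases lt_or_ge i n with hi | hi
  · simpa [Nat.min_eq_left hi, Nat.min_eq_left hi.le] using hstep i hi
  · simp only [Nat.min_eq_right hi, Nat.min_eq_right (hi.trans i.le_succ)]
    rw [condExp_of_stronglyMeasurable (𝒢.le i) ((hadp n).mono (𝒢.mono hi)) (hint n le_rfl)]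

/-- Ville's maximal inequality. -/
theorem Supermartingale.mul_measureReal_exists_le_le_integral {M : ℕ → Ω → ℝ}
    (hM : Supermartingale M 𝒢 μ) (hnonneg : 0 ≤ M) (a : ℝ) (n : ℕ) :
    a * μ.real {ω | ∃ j ≤ n, a ≤ M j ω} ≤ ∫ ω, M 0 ω ∂μ := by
  set A := {ω | ∃ j ≤ n, a ≤ M j ω}
  set τ : Ω → WithTop ℕ := fun ω ↦ (hittingBtwn M (Set.Ici a) 0 n ω : ℕ)
  have hτ : IsStoppingTime 𝒢 τ :=
    hM.stronglyAdapted.adapted.isStoppingTime_hittingBtwn measurableSet_Ici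
  have hτn : ∀ ω, τ ω ≤ n := fun ω ↦ WithTop.coe_le_coe.2 (hittingBtwn_le ω)
  have hint : Integrable (stoppedValue M τ) μ := integrable_stoppedValue ℕ hτ hM.integrable hτn
  have hA : MeasurableSet A := by
    have : A = ⋃ j ∈ Set.Iic n, M j ⁻¹' Set.Ici a := by ext; simp [A]
    rw [this]
    exact .biUnion (Set.to_countable _) fun j _ ↦
      (hM.stronglyMeasurable j).measurable.mono (𝒢.le j) le_rfl measurableSet_Ici
  calc a * μ.real A ≤ ∫ ω in A, stoppedValue M τ ω ∂μ := by
        refine setIntegral_ge_of_const_le_real hA (measure_ne_top μ A) ?_ hint.integrableOn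
        rintro ω ⟨j, hj, hja⟩
        exact stoppedValue_hittingBtwn_mem ⟨j, ⟨Set.mem_Icc.2 ⟨j.zero_le, hj⟩, hja⟩⟩
    _ ≤ ∫ ω, stoppedValue M τ ω ∂μ := setIntegral_le_integral hint (.of_forall fun ω ↦ hnonneg _ ω)
    _ ≤ ∫ ω, M 0 ω ∂μ := by
        have : ∫ ω, -M 0 ω ∂μ ≤ ∫ ω, -stoppedValue M τ ω ∂μ :=
          hM.neg.expected_stoppedValue_mono (isStoppingTime_const 𝒢 0) hτ
            (fun ω ↦ WithTop.coe_le_coe.2 (Nat.zero_le _)) hτn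
        rwa [integral_neg, integral_neg, neg_le_neg_iff] at this

theorem mul_measureReal_exists_le_le_integral_of_condExp_le {M : ℕ → Ω → ℝ} {n : ℕ}
    (hadp : StronglyAdapted 𝒢 M) (hint : ∀ i ≤ n, Integrable (M i) μ)
    (hstep : ∀ i < n, μ[M (i + 1)|𝒢 i] ≤ᵐ[μ] M i) (hnonneg : 0 ≤ M) (a : ℝ) :
    a * μ.real {ω | ∃ j ≤ n, a ≤ M j ω} ≤ ∫ ω, M 0 ω ∂μ := by
  have hset : {ω | ∃ j ≤ n, a ≤ M (min j n) ω} = {ω | ∃ j ≤ n, a ≤ M j ω} :=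
    Set.ext fun ω ↦ exists_congr fun j ↦ and_congr_right fun hj ↦ by rw [min_eq_left hj]
  simpa [hset] using Supermartingale.mul_measureReal_exists_le_le_integral
    (supermartingale_min_of_condExp_le hadp hint hstep) (fun t ↦ hnonneg (min t n)) a n

end Supermartingale

section AzumaExp

noncomputable def azumaExp (X : ℕ → Ω → ℝ) (b c : ℕ → ℝ) (l : ℝ) (t : ℕ) (ω : Ω) : ℝ :=
  exp (l * (X t ω - X 0 ω - ∑ k ∈ Icc 1 t, b k) - l ^ 2 / 2 * ∑ k ∈ Icc 1 t, c k ^ 2)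

variable {X : ℕ → Ω → ℝ} {b c : ℕ → ℝ} {l : ℝ}

lemma azumaExp_nonneg : 0 ≤ azumaExp X b c l := fun _ _ ↦ exp_nonneg _

lemma azumaExp_zero : azumaExp X b c l 0 = 1 := by
  ext; simp [azumaExp]

lemma azumaExp_succ (t : ℕ) (ω : Ω) :
    azumaExp X b c l (t + 1) ω = azumaExp X b c l t ω * exp (-(l * b (t + 1) +
      l ^ 2 * c (t + 1) ^ 2 / 2)) * exp (l * (X (t + 1) ω - X t ω)) := by
  simp only [azumaExp, ← exp_add, sum_Icc_succ_top (Nat.le_add_left 1 t)]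
  ring_nf

lemma exp_le_azumaExp {n t : ℕ} {x : ℝ} {ω : Ω} (hl : 0 ≤ l) (ht : t ≤ n)
    (hx : ∑ k ∈ Icc 1 t, b k + x < X t ω - X 0 ω) :
    exp (l * x - l ^ 2 / 2 * ∑ k ∈ Icc 1 n, c k ^ 2) ≤ azumaExp X b c l t ω := by
  have hc : ∑ k ∈ Icc 1 t, c k ^ 2 ≤ ∑ k ∈ Icc 1 n, c k ^ 2 :=
    sum_le_sum_of_subset_of_nonneg (Icc_subset_Icc_right ht) fun _ _ _ ↦ sq_nonneg _
  refine exp_le_exp.2 (sub_le_sub (mul_le_mul_of_nonneg_left (by linarith) hl) ?_)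
  exact mul_le_mul_of_nonneg_left hc (by positivity)

variable {𝒢 : Filtration ℕ mΩ}

lemma stronglyAdapted_azumaExp (hX : StronglyAdapted 𝒢 X) :
    StronglyAdapted 𝒢 (azumaExp X b c l) := fun t ↦
  ((((((hX t).measurable.sub ((hX 0).mono (𝒢.mono t.zero_le)).measurable).sub_const _).const_mul
    l).sub_const _).exp).stronglyMeasurable

lemma integrable_azumaExp (hX : ∀ t, Measurable (X t)) (hl : 0 ≤ l) {n : ℕ}
    (hbdd : ∀ i < n, ∀ᵐ ω ∂μ, |X (i + 1) ω - X i ω| ≤ c (i + 1)) :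
    ∀ t ≤ n, Integrable (azumaExp X b c l t) μ := by
  intro t
  induction t with
  | zero => exact fun _ ↦ azumaExp_zero (X := X) ▸ integrable_const 1
  | succ t ih =>
    intro ht
    simp_rw [funext (azumaExp_succ t)]
    refine ((ih (by omega)).mul_const _).mul_bdd
      (((hX (t + 1)).sub (hX t)).const_mul l).exp.aestronglyMeasurable
      (c := exp (l * c (t + 1))) ?_
    filter_upwards [hbdd t ht] with ω hω
    rw [norm_of_nonneg (exp_nonneg _), exp_le_exp]
    exact mul_le_mul_of_nonneg_left (le_of_abs_le hω) hl

lemma condExp_azumaExp_succ_le (hX : StronglyAdapted 𝒢 X) (hl : 0 ≤ l) {t : ℕ}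
    (hb : 0 ≤ b (t + 1)) (hc : 0 < c (t + 1))
    (hbdd : ∀ᵐ ω ∂μ, |X (t + 1) ω - X t ω| ≤ c (t + 1))
    (hcond : μ[fun ω ↦ X (t + 1) ω - X t ω|𝒢 t] ≤ᵐ[μ] fun _ ↦ b (t + 1))
    (hint : Integrable (azumaExp X b c l (t + 1)) μ) :
    μ[azumaExp X b c l (t + 1)|𝒢 t] ≤ᵐ[μ] azumaExp X b c l t := by
  set κ := exp (-(l * b (t + 1) + l ^ 2 * c (t + 1) ^ 2 / 2))
  have hD : StronglyMeasurable (fun ω ↦ X (t + 1) ω - X t ω) :=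
    ((hX (t + 1)).mono (𝒢.le _)).sub ((hX t).mono (𝒢.le t))
  have hsplit : azumaExp X b c l (t + 1) =
      (fun ω ↦ azumaExp X b c l t ω * κ) * fun ω ↦ exp (l * (X (t + 1) ω - X t ω)) :=
    funext (azumaExp_succ t)
  rw [hsplit] at hint ⊢
  filter_upwards [condExp_mul_of_stronglyMeasurable_left
    ((stronglyAdapted_azumaExp hX t).mul_const κ) hint
    (integrable_exp_mul_of_abs_le hD.aestronglyMeasurable hbdd l),
    condExp_exp_mul_le (𝒢.le t) hD.aestronglyMeasurable hl hb hc hbdd hcond] with ω h₁ h₂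
  rw [h₁, Pi.mul_apply]
  calc azumaExp X b c l t ω * κ * μ[fun ω ↦ exp (l * (X (t + 1) ω - X t ω))|𝒢 t] ω
      ≤ azumaExp X b c l t ω * κ * exp (l * b (t + 1) + l ^ 2 * c (t + 1) ^ 2 / 2) := by
        gcongr
        exact mul_nonneg (azumaExp_nonneg _ _) (exp_nonneg _)
    _ = azumaExp X b c l t ω := by
        rw [mul_assoc, ← exp_add, neg_add_cancel, exp_zero, mul_one]

end AzumaExp

lemma MeasureTheory.Filtration.natural_eq_comap_fin {X : ℕ → Ω → ℝ}
    (hX : ∀ i, StronglyMeasurable (X i)) (i : ℕ) :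
    Filtration.natural X hX i =
      MeasurableSpace.comap (fun ω (j : Fin (i + 1)) ↦ X j ω) inferInstance := by
  rw [MeasurableSpace.comap_process_pi]
  refine le_antisymm (iSup₂_le fun j hj ↦ ?_) (iSup_le fun j ↦ ?_)
  · exact le_iSup_of_le (⟨j, Nat.lt_succ_of_le hj⟩ : Fin (i + 1)) le_rfl
  · exact le_iSup₂_of_le (j : ℕ) (Nat.le_of_lt_succ j.isLt) le_rfl

end

theorem stmt_9 {Ω : Type*} [MeasurableSpace Ω] (μ : Measure Ω) [IsProbabilityMeasure μ]
    (n : ℕ) (X : ℕ → Ω → ℝ) (c b : ℕ → ℝ)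
    (hc : ∀ k ∈ Finset.Icc 1 n, 0 < c k) (hb : ∀ k ∈ Finset.Icc 1 n, 0 < b k)
    (hmeas : ∀ k, Measurable (X k))
    (hbdd : ∀ k ∈ Finset.Icc 1 n, ∀ᵐ ω ∂μ, |X k ω - X (k - 1) ω| ≤ c k)
    (hcond : ∀ k ∈ Finset.Icc 1 n,
      μ[fun ω => X k ω - X (k - 1) ω |
        MeasurableSpace.comap (fun ω => fun i : Fin k => X i ω) inferInstance]
        ≤ᵐ[μ] fun _ => b k)
    (x : ℝ) (hx : 0 < x) :
    (μ {ω | ∃ t ≤ n, X t ω - X 0 ω > (∑ k ∈ Finset.Icc 1 t, b k) + x}).toReal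
      ≤ Real.exp (-x ^ 2 / (2 * ∑ k ∈ Finset.Icc 1 n, c k ^ 2)) := by
  have hX : ∀ k, StronglyMeasurable (X k) := fun k ↦ (hmeas k).stronglyMeasurable
  have hadp : StronglyAdapted (Filtration.natural X hX) X := Filtration.stronglyAdapted_natural hX
  have hmem : ∀ i < n, i + 1 ∈ Icc 1 n := fun i hi ↦ mem_Icc.2 ⟨by omega, hi⟩
  have hbdd' (i : ℕ) (hi : i < n) : ∀ᵐ ω ∂μ, |X (i + 1) ω - X i ω| ≤ c (i + 1) := by
    simpa using hbdd (i + 1) (hmem i hi)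
  set l := x / ∑ k ∈ Icc 1 n, c k ^ 2
  set a := exp (l * x - l ^ 2 / 2 * ∑ k ∈ Icc 1 n, c k ^ 2)
  have hl : 0 ≤ l := by positivity
  have hint := integrable_azumaExp (b := b) hmeas hl hbdd'
  have hville : a * μ.real {ω | ∃ j ≤ n, a ≤ azumaExp X b c l j ω} ≤ 1 := by
    simpa [azumaExp_zero] using mul_measureReal_exists_le_le_integral_of_condExp_le
      (stronglyAdapted_azumaExp hadp) hint (fun i hi ↦ condExp_azumaExp_succ_le hadp hl
        (hb _ (hmem i hi)).le (hc _ (hmem i hi)) (hbdd' i hi)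
        (by simpa [Filtration.natural_eq_comap_fin] using hcond (i + 1) (hmem i hi))
        (hint _ hi)) azumaExp_nonneg a
  calc μ.real {ω | ∃ t ≤ n, X t ω - X 0 ω > ∑ k ∈ Icc 1 t, b k + x}
      ≤ μ.real {ω | ∃ j ≤ n, a ≤ azumaExp X b c l j ω} :=
        measureReal_mono fun ω ⟨t, ht, hxt⟩ ↦ ⟨t, ht, exp_le_azumaExp hl ht hxt⟩
    _ ≤ a⁻¹ := by rw [← one_div, le_div_iff₀' (exp_pos _)]; exact hville
    _ = exp (-x ^ 2 / (2 * ∑ k ∈ Icc 1 n, c k ^ 2)) := (exp_neg_sq_div_eq_inv _ _).symm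
end

section
/- Fix nonnegative integers m₁, m₂ with m = m₁+m₂ ≥ 1 and σ ∈ {1,2}. In the preferential attachment process G^n_m, for any vertex v and any set W ⊆ {1,...,v-1}, let E be any event that involves only edges stemming from vertices older than v (i.e., from vertices in {1,...,v-1}). Then, conditional upon E, the probability that none of the m_σ designated edges stemming from v is attached to a vertex of W is at most (1 - |W|/(2v))^{m_σ}. -/
open MeasureTheory Finset

/-- Degree of vertex `s` at time `r` in the `G₁`-preferential attachment process with
attachment map `g`: each vertex `u ∈ {1,...,r}` contributes one half-edge as a sender and
one half-edge to its target `g u` (so a loop counts twice towards the degree). -/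
def paDeg (g : ℕ → ℕ) (s r : ℕ) : ℕ :=
  (if s ∈ Finset.Icc 1 r then 1 else 0) +
    ((Finset.Icc 1 r).filter (fun u => g u = s)).card

/-- The attachment weight of step `t`: in the preferential attachment process the edge
stemming from `t` is attached to `s` with probability `paWeight · /(2t-1)`, where the
weight is the current degree of `s` for `s < t`, and `1` for the loop `s = t`. -/
def paWeight (g : ℕ → ℕ) (t : ℕ) : ℕ :=
  if g t = t then 1 else paDeg g (g t) (t - 1)

/-- `IsPA N μ F` states that the random attachment map `F` is a preferential attachment
process (Bollobás–Riordan `G₁` process) of length `N` on the probability space `(Ω, μ)`: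
each `F · t ∈ {1,...,t}`, and conditionally on the past, step `t` attaches to a vertex
with probability proportional to its current degree (the new half-edge counting one). -/
def IsPA {Ω : Type*} [MeasurableSpace Ω] (N : ℕ) (μ : MeasureTheory.Measure Ω)
    (F : Ω → ℕ → ℕ) : Prop :=
  (∀ᵐ ω ∂μ, ∀ t ∈ Finset.Icc 1 N, F ω t ∈ Finset.Icc 1 t) ∧
  ∀ t ∈ Finset.Icc 1 N, ∀ g : ℕ → ℕ,
    μ {ω | ∀ u ∈ Finset.Icc 1 t, F ω u = g u}
      = μ {ω | ∀ u ∈ Finset.Icc 1 (t - 1), F ω u = g u}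
          * (paWeight g t : ENNReal) / ((2 * t - 1 : ℕ) : ENNReal)

/-- The group model `G^n_m`: vertex `v` corresponds to mini-vertices
`m(v-1)+1, ..., mv` of the `G₁` process; mini-vertex `j` belongs to vertex `⌈j/m⌉`. -/
def paVertOf (m j : ℕ) : ℕ := (j + m - 1) / m

/-!
Since no measurability is assumed, we never condition: instead we bound the finite sums
`paMass` of the probabilities of the cylinders `{F = g on [1, t]}` over the admissible
histories `g` satisfying a property, using only subadditivity of `μ` and the product rule of
`IsPA` for a single cylinder. Going from mini-vertex `t` to `t + 1` does not increase such a
mass. If `t + 1` is one of the designated mini-vertices of `v` and the new edge must avoid `W`,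
the mass gets multiplied by at most `1 - |W|/(2v)`: each of the `m|W|` mini-vertices of `W`
carries weight at least one, out of a total weight `2t + 1 ≤ 2mv`. Finally, the mass at time
`m(v - 1)` of the histories lying in `E` is at most `μ E`, because `E` depends only on them.
-/

open scoped Classical

section Degrees

variable {g : ℕ → ℕ} {r t : ℕ}

lemma paDeg_congr {g' : ℕ → ℕ} (s : ℕ) (h : ∀ u ∈ Icc 1 r, g u = g' u) :
    paDeg g s r = paDeg g' s r := by
  unfold paDeg
  congr 2
  exact filter_congr fun u hu => by rw [h u hu]

lemma sum_paDeg (hg : ∀ u ∈ Icc 1 r, g u ∈ Icc 1 u) :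
    ∑ s ∈ Icc 1 r, paDeg g s r = 2 * r := by
  have hsend : ∑ s ∈ Icc 1 r, (if s ∈ Icc 1 r then 1 else 0) = r := by
    rw [sum_ite_mem, inter_self, sum_const, smul_eq_mul, mul_one, Nat.card_Icc, Nat.add_sub_cancel]
  have hrecv : ∑ s ∈ Icc 1 r, #{u ∈ Icc 1 r | g u = s} = r := by
    rw [← card_eq_sum_card_fiberwise fun u hu => Icc_subset_Icc_right (mem_Icc.1 hu).2 (hg u hu),
      Nat.card_Icc, Nat.add_sub_cancel]
  simp only [paDeg, sum_add_distrib, hsend, hrecv]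
  ring

lemma paWeight_update_self : paWeight (Function.update g t t) t = 1 := by
  simp [paWeight]

lemma paWeight_update_of_ne {a : ℕ} (ha : a ≠ t) :
    paWeight (Function.update g t a) t = paDeg g a (t - 1) := by
  rw [paWeight, Function.update_self, if_neg ha]
  exact paDeg_congr a fun u hu => Function.update_of_ne (by grind) _ _

lemma one_le_paWeight_update {a : ℕ} (ha : a ∈ Icc 1 (t + 1)) :
    1 ≤ paWeight (Function.update g (t + 1) a) (t + 1) := by
  rcases eq_or_ne a (t + 1) with rfl | hat
  · rw [paWeight_update_self]
  · rw [paWeight_update_of_ne hat, paDeg, if_pos (by grind)]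
    omega

lemma sum_paWeight_update (hg : ∀ u ∈ Icc 1 t, g u ∈ Icc 1 u) :
    ∑ a ∈ Icc 1 (t + 1), paWeight (Function.update g (t + 1) a) (t + 1) = 2 * t + 1 := by
  rw [← insert_Icc_right_eq_Icc_add_one (by omega), sum_insert (by simp), paWeight_update_self,
    sum_congr rfl fun a ha => paWeight_update_of_ne (by grind), Nat.add_sub_cancel, sum_paDeg hg]
  ring

end Degrees

section MiniVertices

variable {m : ℕ}

lemma paVertOf_eq_iff (hm : 0 < m) {a w : ℕ} (hw : 0 < w) :
    paVertOf m a = w ↔ a ∈ Ioc (m * (w - 1)) (m * w) := by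
  obtain ⟨k, rfl⟩ := Nat.exists_eq_add_of_lt hw
  rw [paVertOf, Nat.div_eq_iff hm, mem_Ioc]
  simp only [zero_add, Nat.add_sub_cancel, mul_add, add_mul, mul_one, one_mul, mul_comm k m]
  omega

lemma filter_paVertOf_eq (hm : 0 < m) {w t : ℕ} (hw : 0 < w) (hwt : m * w ≤ t) :
    {a ∈ Icc 1 t | paVertOf m a = w} = Ioc (m * (w - 1)) (m * w) := by
  ext a
  rw [mem_filter, paVertOf_eq_iff hm hw, mem_Icc, mem_Ioc]
  omega

lemma card_filter_paVertOf_mem (hm : 0 < m) {k t : ℕ} {W : Finset ℕ} (hW : W ⊆ Icc 1 k)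
    (hkt : m * k ≤ t) : #{a ∈ Icc 1 t | paVertOf m a ∈ W} = m * #W := by
  rw [card_eq_sum_card_fiberwise (s := {a ∈ Icc 1 t | paVertOf m a ∈ W}) (t := W)
    fun a ha => (mem_filter.1 ha).2]
  have hfiber : ∀ w ∈ W, #{a ∈ {a ∈ Icc 1 t | paVertOf m a ∈ W} | paVertOf m a = w} = m := by
    intro w hw
    obtain ⟨hw1, hwk⟩ := mem_Icc.1 (hW hw)
    rw [filter_filter, filter_congr fun a _ => and_iff_right_of_imp fun h => h ▸ hw,
      filter_paVertOf_eq hm hw1 ((Nat.mul_le_mul_left m hwk).trans hkt), Nat.card_Ioc]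
    obtain ⟨j, rfl⟩ := Nat.exists_eq_add_of_le hw1
    simp [mul_add]
  rw [sum_congr rfl hfiber, sum_const, smul_eq_mul, mul_comm]

end MiniVertices

lemma sum_paWeight_avoid_add_le {g : ℕ → ℕ} {m k t : ℕ} {W : Finset ℕ} (hm : 0 < m)
    (hg : ∀ u ∈ Icc 1 t, g u ∈ Icc 1 u) (hW : W ⊆ Icc 1 k) (hkt : m * k ≤ t + 1) :
    ∑ a ∈ Icc 1 (t + 1) with paVertOf m a ∉ W, paWeight (Function.update g (t + 1) a) (t + 1)
      + m * #W ≤ 2 * t + 1 := by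
  rw [← sum_paWeight_update hg, ← sum_filter_not_add_sum_filter (Icc 1 (t + 1))
    (fun a => paVertOf m a ∈ W)]
  refine Nat.add_le_add_left ?_ _
  rw [← card_filter_paVertOf_mem hm hW hkt, card_eq_sum_ones]
  exact sum_le_sum fun a ha => one_le_paWeight_update (mem_filter.1 ha).1

lemma natCast_le_ofReal_mul {K D m c v : ℕ} (hKD : K + m * c ≤ D) (hD : D ≤ 2 * m * v) :
    (K : ENNReal) ≤ ENNReal.ofReal (1 - c / (2 * v)) * D := by
  have hshare : (c : ℝ) / (2 * v) * D ≤ m * c := by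
    rcases Nat.eq_zero_or_pos v with rfl | hv
    · simp only [Nat.cast_zero, mul_zero, div_zero, zero_mul]
      positivity
    rw [div_mul_eq_mul_div, div_le_iff₀ (by positivity)]
    have : (D : ℝ) ≤ 2 * m * v := by exact_mod_cast hD
    nlinarith [(Nat.cast_nonneg c : (0 : ℝ) ≤ c)]
  have hKD' : (K : ℝ) + m * c ≤ D := by exact_mod_cast hKD
  rw [← ENNReal.ofReal_natCast D, ← ENNReal.ofReal_mul' (Nat.cast_nonneg _),
    ← ENNReal.ofReal_natCast K]
  exact ENNReal.ofReal_le_ofReal (by linarith)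

noncomputable def paPatterns : ℕ → Finset (ℕ → ℕ)
  | 0 => {fun _ => 0}
  | t + 1 => (paPatterns t ×ˢ Icc 1 (t + 1)).image fun p => Function.update p.1 (t + 1) p.2

lemma mem_paPatterns {t : ℕ} {g : ℕ → ℕ} :
    g ∈ paPatterns t ↔ (∀ u ∈ Icc 1 t, g u ∈ Icc 1 u) ∧ ∀ u ∉ Icc 1 t, g u = 0 := by
  induction t generalizing g with
  | zero => simp [paPatterns, funext_iff]
  | succ t ih =>
    simp only [paPatterns, mem_image, mem_product, Prod.exists]
    constructor
    · rintro ⟨g', a, ⟨hg', ha⟩, rfl⟩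
      obtain ⟨hrange, hzero⟩ := ih.1 hg'
      refine ⟨fun u hu => ?_, fun u hu => ?_⟩
      · rcases eq_or_ne u (t + 1) with rfl | hut
        · simpa using ha
        · rw [Function.update_of_ne hut]
          exact hrange u (by grind)
      · rw [Function.update_of_ne (by grind)]
        exact hzero u (by grind)
    · rintro ⟨hrange, hzero⟩
      refine ⟨Function.update g (t + 1) 0, g (t + 1), ⟨ih.2 ⟨fun u hu => ?_, fun u hu => ?_⟩,
        hrange _ (by simp)⟩, by simp⟩
      · rw [Function.update_of_ne (by grind)]
        exact hrange u (by grind)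
      · rcases eq_or_ne u (t + 1) with rfl | hut
        · simp
        · rw [Function.update_of_ne hut]
          exact hzero u (by grind)

lemma sum_paPatterns_succ {M : Type*} [AddCommMonoid M] (t : ℕ) (f : (ℕ → ℕ) → M) :
    ∑ g ∈ paPatterns (t + 1), f g
      = ∑ g ∈ paPatterns t, ∑ a ∈ Icc 1 (t + 1), f (Function.update g (t + 1) a) := by
  rw [paPatterns, sum_image, sum_product]
  rintro ⟨g, a⟩ hga ⟨g', a'⟩ hga' heq
  simp only [coe_product, Set.mem_prod, mem_coe] at hga hga'
  have hg := (mem_paPatterns.1 hga.1).2 (t + 1) (by simp)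
  have hg' := (mem_paPatterns.1 hga'.1).2 (t + 1) (by simp)
  refine Prod.ext (funext fun u => ?_) (by simpa using congrFun heq (t + 1))
  rcases eq_or_ne u (t + 1) with rfl | hut
  · exact hg.trans hg'.symm
  · simpa [Function.update_of_ne hut] using congrFun heq u

section Measure

variable {Ω : Type*} {F : Ω → ℕ → ℕ} {t : ℕ}

def paCyl (F : Ω → ℕ → ℕ) (t : ℕ) (g : ℕ → ℕ) : Set Ω := {ω | ∀ u ∈ Icc 1 t, F ω u = g u}

def paTrunc (F : Ω → ℕ → ℕ) (t : ℕ) (ω : Ω) : ℕ → ℕ := fun u => if u ∈ Icc 1 t then F ω u else 0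

lemma paTrunc_apply {ω : Ω} {u : ℕ} (hu : u ∈ Icc 1 t) : paTrunc F t ω u = F ω u := if_pos hu

lemma mem_paCyl_paTrunc (ω : Ω) : ω ∈ paCyl F t (paTrunc F t ω) :=
  fun _ hu => (paTrunc_apply hu).symm

variable [MeasurableSpace Ω] {μ : Measure Ω} {N : ℕ}

noncomputable def paMass (μ : Measure Ω) (F : Ω → ℕ → ℕ) (P : (ℕ → ℕ) → Prop) (t : ℕ) :
    ENNReal :=
  ∑ g ∈ paPatterns t with P g, μ (paCyl F t g)

lemma ae_paTrunc_mem_paPatterns (hF : IsPA N μ F) (ht : t ≤ N) :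
    ∀ᵐ ω ∂μ, paTrunc F t ω ∈ paPatterns t :=
  hF.1.mono fun _ hω => mem_paPatterns.2
    ⟨fun u hu => paTrunc_apply hu ▸ hω u (Icc_subset_Icc_right ht hu), fun _ hu => if_neg hu⟩

lemma measure_paCyl_update (hF : IsPA N μ F) (ht : t + 1 ≤ N) (g : ℕ → ℕ) (a : ℕ) :
    μ (paCyl F (t + 1) (Function.update g (t + 1) a))
      = μ (paCyl F t g) * paWeight (Function.update g (t + 1) a) (t + 1) / (2 * t + 1 : ℕ) := by
  rw [paCyl, hF.2 (t + 1) (mem_Icc.2 ⟨by omega, ht⟩), Nat.add_sub_cancel,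
    show 2 * (t + 1) - 1 = 2 * t + 1 by omega]
  congr 3
  ext ω
  exact forall₂_congr fun u hu => by rw [Function.update_of_ne (by grind)]


lemma paMass_succ_le_mul (hF : IsPA N μ F) (ht : t + 1 ≤ N) {P P' : (ℕ → ℕ) → Prop}
    {q : ENNReal} (hP : ∀ g a, P' (Function.update g (t + 1) a) → P g)
    (hq : ∀ g ∈ paPatterns t, P g →
      ((∑ a ∈ Icc 1 (t + 1) with P' (Function.update g (t + 1) a),
        paWeight (Function.update g (t + 1) a) (t + 1) : ℕ) : ENNReal) ≤ q * (2 * t + 1 : ℕ)) :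
    paMass μ F P' (t + 1) ≤ q * paMass μ F P t := by
  rw [paMass, paMass, sum_filter, sum_filter, sum_paPatterns_succ, mul_sum]
  refine sum_le_sum fun g hg => ?_
  by_cases hPg : P g
  · rw [if_pos hPg, ← sum_filter]
    simp_rw [measure_paCyl_update hF ht, div_eq_mul_inv,
      mul_right_comm _ _ ((2 * t + 1 : ℕ) : ENNReal)⁻¹, ← mul_sum]
    set D : ENNReal := ((2 * t + 1 : ℕ) : ENNReal)
    have hD : D ≠ 0 := Nat.cast_ne_zero.2 (by omega)
    calc μ (paCyl F t g) * D⁻¹ * ∑ a ∈ Icc 1 (t + 1) with P' (Function.update g (t + 1) a),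
          (paWeight (Function.update g (t + 1) a) (t + 1) : ENNReal)
        ≤ μ (paCyl F t g) * D⁻¹ * (q * D) := by
          gcongr
          exact_mod_cast hq g hg hPg
      _ = q * μ (paCyl F t g) := by
          rw [mul_comm q, ← mul_assoc, mul_assoc _ D⁻¹, ENNReal.inv_mul_cancel hD (ENNReal.natCast_ne_top _),
            mul_one, mul_comm]
  · rw [if_neg hPg, mul_zero]
    exact (sum_eq_zero fun a _ => if_neg fun h => hPg (hP g a h)).le

lemma paMass_succ_le (hF : IsPA N μ F) (ht : t + 1 ≤ N) {P P' : (ℕ → ℕ) → Prop}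
    (hP : ∀ g a, P' (Function.update g (t + 1) a) → P g) :
    paMass μ F P' (t + 1) ≤ paMass μ F P t := by
  refine (paMass_succ_le_mul hF ht hP (q := 1) fun g hg _ => ?_).trans_eq (one_mul _)
  rw [one_mul, ← sum_paWeight_update (mem_paPatterns.1 hg).1]
  exact_mod_cast sum_le_sum_of_subset (filter_subset _ _)

lemma paMass_le_measure_univ (hF : IsPA N μ F) (ht : t ≤ N) :
    paMass μ F (fun _ => True) t ≤ μ Set.univ := by
  induction t with
  | zero => simp [paMass, paPatterns, paCyl]
  | succ t ih => exact (paMass_succ_le hF ht fun _ _ h => h).trans (ih (by omega))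

lemma measure_le_paMass (hF : IsPA N μ F) (ht : t ≤ N) {B : Set Ω} {P : (ℕ → ℕ) → Prop}
    (h : ∀ᵐ ω ∂μ, ω ∈ B → P (paTrunc F t ω)) : μ B ≤ paMass μ F P t :=
  calc μ B ≤ μ (⋃ g ∈ ({g ∈ paPatterns t | P g} : Finset _), paCyl F t g) :=
        measure_mono_ae <| (h.and (ae_paTrunc_mem_paPatterns hF ht)).mono fun ω hω hB =>
          Set.mem_iUnion₂.2 ⟨_, mem_filter.2 ⟨hω.2, hω.1 hB⟩, mem_paCyl_paTrunc ω⟩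
    _ ≤ paMass μ F P t := measure_biUnion_finset_le _ _

lemma paMass_le_measure [IsFiniteMeasure μ] (hF : IsPA N μ F) (ht : t ≤ N) {B : Set Ω}
    {P : (ℕ → ℕ) → Prop} (h : ∀ᵐ ω ∂μ, P (paTrunc F t ω) → ω ∈ B) : paMass μ F P t ≤ μ B := by
  have hcompl : μ Bᶜ ≤ paMass μ F (fun g => ¬ P g) t :=
    measure_le_paMass hF ht (h.mono fun _ h hB hP => hB (h hP))
  refine ENNReal.le_of_add_le_add_right (measure_ne_top μ Bᶜ) ?_
  calc paMass μ F P t + μ Bᶜ ≤ paMass μ F P t + paMass μ F (fun g => ¬ P g) t := by gcongr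
    _ = paMass μ F (fun _ => True) t := by
        rw [paMass, paMass, paMass, sum_filter_add_sum_filter_not, filter_true]
    _ ≤ μ Set.univ := paMass_le_measure_univ hF ht
    _ ≤ μ B + μ Bᶜ := measure_univ_le_add_compl B

end Measure

lemma le_prod_Ioc_mul_of_le_mul {M : Type*} [CommMonoid M] [Preorder M] [MulLeftMono M]
    {X c : ℕ → M} {a b : ℕ} (hab : a ≤ b) (h : ∀ t ∈ Ico a b, X (t + 1) ≤ c (t + 1) * X t) :
    X b ≤ (∏ j ∈ Ioc a b, c j) * X a := by
  induction b, hab using Nat.le_induction with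
  | base => simp
  | succ b hab ih =>
    calc X (b + 1) ≤ c (b + 1) * X b := h b (mem_Ico.2 ⟨hab, by omega⟩)
      _ ≤ c (b + 1) * ((∏ j ∈ Ioc a b, c j) * X a) :=
          mul_le_mul_right (ih fun t ht => h t (Ico_subset_Ico_right (by omega) ht)) _
      _ = (∏ j ∈ Ioc a (b + 1), c j) * X a := by rw [prod_Ioc_succ_top hab, mul_comm _ (c _),
          mul_assoc]

section Avoidance

variable {Ω : Type*} [MeasurableSpace Ω] {μ : Measure Ω} {F : Ω → ℕ → ℕ} {N : ℕ}

lemma paMass_succ_le_of_avoid (hF : IsPA N μ F) {m v t : ℕ} {W : Finset ℕ}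
    (hW : W ⊆ Icc 1 (v - 1)) (hvt : m * (v - 1) ≤ t) (htv : t < m * v) (htN : t + 1 ≤ N)
    {P P' : (ℕ → ℕ) → Prop}
    (hP : ∀ g a, P' (Function.update g (t + 1) a) → P g ∧ paVertOf m a ∉ W) :
    paMass μ F P' (t + 1) ≤ ENNReal.ofReal (1 - #W / (2 * v)) * paMass μ F P t := by
  have hm : 0 < m := Nat.pos_of_ne_zero (by rintro rfl; simp at htv)
  refine paMass_succ_le_mul hF htN (fun g a h => (hP g a h).1) fun g hg _ => ?_
  have havoid : {a ∈ Icc 1 (t + 1) | P' (Function.update g (t + 1) a)}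
      ⊆ {a ∈ Icc 1 (t + 1) | paVertOf m a ∉ W} :=
    monotone_filter_right _ fun a _ h => (hP g a h).2
  refine natCast_le_ofReal_mul (m := m) ?_ (by rw [mul_assoc]; omega)
  exact (Nat.add_le_add_right (sum_le_sum_of_subset havoid) _).trans
    (sum_paWeight_avoid_add_le hm (mem_paPatterns.1 hg).1 hW (by omega))

theorem measure_avoid_inter_le [IsFiniteMeasure μ] (hF : IsPA N μ F) {m v : ℕ}
    (hvN : m * v ≤ N) {I W : Finset ℕ} (hI : I ⊆ Ioc (m * (v - 1)) (m * v))
    (hW : W ⊆ Icc 1 (v - 1)) {S : Set (ℕ → ℕ)}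
    (hS : ∀ g g' : ℕ → ℕ, (∀ u ∈ Icc 1 (m * (v - 1)), g u = g' u) → (g ∈ S ↔ g' ∈ S)) :
    μ ({ω | ∀ j ∈ I, paVertOf m (F ω j) ∉ W} ∩ {ω | F ω ∈ S})
      ≤ ENNReal.ofReal (1 - #W / (2 * v)) ^ #I * μ {ω | F ω ∈ S} := by
  set base := m * (v - 1)
  set q := ENNReal.ofReal (1 - #W / (2 * v))
  let P : ℕ → (ℕ → ℕ) → Prop := fun t g => g ∈ S ∧ ∀ j ∈ I, j ≤ t → paVertOf m (g j) ∉ W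
  have hbase : base ≤ m * v := Nat.mul_le_mul_left _ (Nat.sub_le _ _)
  have hS_trunc : ∀ t, base ≤ t → ∀ ω, (paTrunc F t ω ∈ S ↔ F ω ∈ S) := fun t ht ω =>
    hS _ _ fun u hu => paTrunc_apply (Icc_subset_Icc_right ht hu)
  have hrestrict : ∀ t, base ≤ t → ∀ g a, P (t + 1) (Function.update g (t + 1) a) →
      P t g ∧ (t + 1 ∈ I → paVertOf m a ∉ W) := by
    rintro t ht g a ⟨hgS, hgW⟩
    refine ⟨⟨(hS _ _ fun u hu => Function.update_of_ne (by grind) _ _).1 hgS, fun j hj hjt => ?_⟩,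
      fun hI' => by simpa using hgW _ hI' le_rfl⟩
    simpa [Function.update_of_ne (show j ≠ t + 1 by omega)] using hgW j hj (by omega)
  have hstep : ∀ t ∈ Ico base (m * v), paMass μ F (P (t + 1)) (t + 1)
      ≤ (if t + 1 ∈ I then q else 1) * paMass μ F (P t) t := by
    intro t ht
    obtain ⟨hbt, htv⟩ := mem_Ico.1 ht
    split_ifs with htI
    · exact paMass_succ_le_of_avoid hF hW hbt htv (by omega) fun g a h =>
        ⟨(hrestrict t hbt g a h).1, (hrestrict t hbt g a h).2 htI⟩
    · exact (paMass_succ_le hF (by omega) fun g a h => (hrestrict t hbt g a h).1).trans_eq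
        (one_mul _).symm
  calc μ ({ω | ∀ j ∈ I, paVertOf m (F ω j) ∉ W} ∩ {ω | F ω ∈ S})
      ≤ paMass μ F (P (m * v)) (m * v) := measure_le_paMass hF hvN <| ae_of_all _
        fun ω ⟨hω, hωS⟩ => ⟨(hS_trunc _ hbase ω).2 hωS, fun j hj _ => by
          rw [paTrunc_apply (by grind)]
          exact hω j hj⟩
    _ ≤ (∏ j ∈ Ioc base (m * v), if j ∈ I then q else 1) * paMass μ F (P base) base :=
        le_prod_Ioc_mul_of_le_mul (X := fun t => paMass μ F (P t) t) hbase hstep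
    _ = q ^ #I * paMass μ F (P base) base := by
        rw [prod_ite_mem, inter_eq_right.2 hI, prod_const]
    _ ≤ q ^ #I * μ {ω | F ω ∈ S} := by
        gcongr
        exact paMass_le_measure hF (hbase.trans hvN) <| ae_of_all _
          fun ω h => (hS_trunc _ le_rfl ω).1 h.1

end Avoidance

theorem stmt_12_general {Ω : Type*} [MeasurableSpace Ω] (μ : Measure Ω) [IsProbabilityMeasure μ]
    (n m m₁ m₂ : ℕ) (hm : m = m₁ + m₂)
    (F : Ω → ℕ → ℕ) (hF : IsPA (m * n) μ F)
    (σ : ℕ)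
    (mσ : ℕ) (hmσ : mσ = if σ = 1 then m₁ else m₂)
    (v : ℕ) (hv : v ∈ Finset.Icc 1 n)
    (I : Finset ℕ)
    (hI : I = if σ = 1 then Finset.Icc (m * (v - 1) + 1) (m * (v - 1) + m₁)
      else Finset.Icc (m * (v - 1) + m₁ + 1) (m * v))
    (W : Finset ℕ) (hW : W ⊆ Finset.Icc 1 (v - 1))
    (E : Set Ω) (S : Set (ℕ → ℕ)) (hE : E = {ω | F ω ∈ S})
    (hS : ∀ g g' : ℕ → ℕ, (∀ u ∈ Finset.Icc 1 (m * (v - 1)), g u = g' u) →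
      (g ∈ S ↔ g' ∈ S)) :
    μ ({ω | ∀ j ∈ I, paVertOf m (F ω j) ∉ W} ∩ E)
      ≤ ENNReal.ofReal ((1 - (W.card : ℝ) / (2 * v)) ^ mσ) * μ E := by
  obtain ⟨hv1, hvn⟩ := mem_Icc.1 hv
  have hmv : m * (v - 1) + m = m * v := by
    rw [← mul_add_one, Nat.sub_add_cancel hv1]
  have hIσ : I ⊆ Ioc (m * (v - 1)) (m * v) ∧ #I = mσ := by
    split_ifs at hI hmσ <;> subst hI hmσ <;>
      exact ⟨fun j hj => by grind, by rw [Nat.card_Icc]; omega⟩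
  have hq : 0 ≤ 1 - (#W : ℝ) / (2 * v) := by
    have hWv : #W ≤ v := (card_le_card hW).trans (by simp)
    rw [sub_nonneg, div_le_one (by positivity)]
    exact_mod_cast hWv.trans (by omega)
  subst hE
  rw [ENNReal.ofReal_pow hq, ← hIσ.2]
  exact measure_avoid_inter_le hF (Nat.mul_le_mul_left m hvn) hIσ.1 hW hS

theorem stmt_12 {Ω : Type*} [MeasurableSpace Ω] (μ : Measure Ω) [IsProbabilityMeasure μ]
    (n m m₁ m₂ : ℕ) (hm : m = m₁ + m₂) (hm1 : 1 ≤ m)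
    (F : Ω → ℕ → ℕ) (hF : IsPA (m * n) μ F)
    (σ : ℕ) (hσ : σ = 1 ∨ σ = 2)
    (mσ : ℕ) (hmσ : mσ = if σ = 1 then m₁ else m₂)
    (v : ℕ) (hv : v ∈ Finset.Icc 1 n)
    (I : Finset ℕ)
    (hI : I = if σ = 1 then Finset.Icc (m * (v - 1) + 1) (m * (v - 1) + m₁)
      else Finset.Icc (m * (v - 1) + m₁ + 1) (m * v))
    (W : Finset ℕ) (hW : W ⊆ Finset.Icc 1 (v - 1))
    (E : Set Ω) (S : Set (ℕ → ℕ)) (hE : E = {ω | F ω ∈ S})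
    (hS : ∀ g g' : ℕ → ℕ, (∀ u ∈ Finset.Icc 1 (m * (v - 1)), g u = g' u) →
      (g ∈ S ↔ g' ∈ S)) :
    μ ({ω | ∀ j ∈ I, paVertOf m (F ω j) ∉ W} ∩ E)
      ≤ ENNReal.ofReal ((1 - (W.card : ℝ) / (2 * v)) ^ mσ) * μ E :=
  stmt_12_general μ n m m₁ m₂ hm F hF σ mσ hmσ v hv I hI W hW E S hE hS
end

section
/- Let G = (V,E) be a graph on n vertices and let h = n - 2⌈βn⌉ for some β with 0 < β < 1/2. If G contains no path on more than h vertices, then there exist disjoint vertex sets U and W, each of size at least ⌈βn⌉, with no edges between U and W. -/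
/-!
Depth-first search. Keep a path `P` (a vertex list, newest vertex first), a set `U` of unexplored
vertices off `P`, and declare every other vertex dead, maintaining that no unexplored vertex has a
dead neighbour. While `|U| > b`: if `P` is empty, start it at any vertex of `U`; if the newest
vertex of `P` has a neighbour in `U`, push it; otherwise the newest vertex dies. The potential
`2|U| + |P|` drops at every step and `|U|` drops by at most one, so eventually `|U| = b`. Then
`|P| ≤ h`, so at least `n - b - h ≥ b` vertices are dead, and there are no edges between them and `U`.
-/

open Finset

namespace SimpleGraph

variable {V : Type*} {G : SimpleGraph V}

lemma length_le_of_isChain_of_nodup {h : ℕ}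
    (hpath : ∀ (u v : V) (p : G.Walk u v), p.IsPath → p.support.length ≤ h)
    {l : List V} (hc : l.IsChain G.Adj) (hnd : l.Nodup) : l.length ≤ h := by
  rcases eq_or_ne l [] with rfl | hne
  · exact Nat.zero_le h
  · have hsupp := Walk.support_ofSupport hne hc
    have := hpath _ _ _ ((Walk.isPath_def _).mpr (hsupp ▸ hnd))
    rwa [hsupp] at this

/-- The path `P` is listed from its current end; the dead vertices are those neither in `U` nor
on `P`. -/
structure IsDFSState (G : SimpleGraph V) (U : Finset V) (P : List V) : Prop where
  isChain : P.IsChain G.Adj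
  nodup : P.Nodup
  notMem_of_mem_path : ∀ v ∈ P, v ∉ U
  adj_mem : ∀ u ∈ U, ∀ w, G.Adj u w → w ∈ U ∨ w ∈ P

namespace IsDFSState

variable {U : Finset V} {P : List V}

lemma univ_nil [Fintype V] : IsDFSState G univ [] :=
  ⟨List.isChain_nil, List.nodup_nil, by simp, fun _ _ w _ => .inl (mem_univ w)⟩

lemma push [DecidableEq V] (hs : IsDFSState G U P) {u : V} (hu : u ∈ U)
    (hadj : ∀ x ∈ P.head?, G.Adj u x) : IsDFSState G (U.erase u) (u :: P) where
  isChain := List.isChain_cons.mpr ⟨hadj, hs.isChain⟩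
  nodup := List.nodup_cons.mpr ⟨fun huP => hs.notMem_of_mem_path u huP hu, hs.nodup⟩
  notMem_of_mem_path v hv := by
    rcases List.mem_cons.mp hv with rfl | hv
    · exact notMem_erase v U
    · exact fun hvU => hs.notMem_of_mem_path v hv (mem_of_mem_erase hvU)
  adj_mem a ha w hadj := by
    rcases hs.adj_mem a (mem_of_mem_erase ha) w hadj with hw | hw
    · by_cases hwu : w = u
      · exact .inr (hwu ▸ List.mem_cons_self)
      · exact .inl (mem_erase.mpr ⟨hwu, hw⟩)
    · exact .inr (List.mem_cons_of_mem u hw)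

lemma pop {x : V} (hs : IsDFSState G U (x :: P)) (hx : ∀ u ∈ U, ¬G.Adj x u) :
    IsDFSState G U P where
  isChain := hs.isChain.tail
  nodup := (List.nodup_cons.mp hs.nodup).2
  notMem_of_mem_path v hv := hs.notMem_of_mem_path v (List.mem_cons_of_mem x hv)
  adj_mem a ha w hadj := by
    rcases hs.adj_mem a ha w hadj with hw | hw
    · exact .inl hw
    · rcases List.mem_cons.mp hw with rfl | hw
      · exact absurd hadj.symm (hx a ha)
      · exact .inr hw

lemma exists_step (hs : IsDFSState G U P) (hU : U.Nonempty) :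
    ∃ U' P', IsDFSState G U' P' ∧ #U ≤ #U' + 1 ∧ 2 * #U' + P'.length < 2 * #U + P.length := by
  classical
  cases P with
  | nil =>
    obtain ⟨u, hu⟩ := hU
    refine ⟨_, _, hs.push hu (by simp), ?_, ?_⟩ <;>
      simp only [card_erase_of_mem hu, List.length_cons, List.length_nil] <;> grind [card_pos]
  | cons x P =>
    by_cases hx : ∃ u ∈ U, G.Adj x u
    · obtain ⟨u, hu, hxu⟩ := hx
      refine ⟨_, _, hs.push hu (by simpa using hxu.symm), ?_, ?_⟩ <;>
        simp only [card_erase_of_mem hu, List.length_cons] <;> grind [card_pos]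
    · simp only [not_exists, not_and] at hx
      exact ⟨U, P, hs.pop hx, by omega, by simp⟩

lemma exists_card_eq (hs : IsDFSState G U P) {b : ℕ} (hb : b ≤ #U) :
    ∃ U' P', IsDFSState G U' P' ∧ #U' = b := by
  induction hm : 2 * #U + P.length using Nat.strong_induction_on generalizing U P with
  | _ m ih =>
    rcases hb.eq_or_lt with hbU | hbU
    · exact ⟨U, P, hs, hbU.symm⟩
    · obtain ⟨U', P', hs', hcard, hlt⟩ := hs.exists_step (card_pos.mp (by omega))
      exact ih _ (hm ▸ hlt) hs' (by omega) rfl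

end IsDFSState

theorem exists_disjoint_card_le_not_adj_of_support_length_le [Fintype V]
    {h b : ℕ} (hpath : ∀ (u v : V) (p : G.Walk u v), p.IsPath → p.support.length ≤ h)
    (hb : h + 2 * b ≤ Fintype.card V) :
    ∃ U W : Finset V, Disjoint U W ∧ b ≤ #U ∧ b ≤ #W ∧ ∀ u ∈ U, ∀ w ∈ W, ¬G.Adj u w := by
  classical
  obtain ⟨U, P, hs, hU⟩ :=
    IsDFSState.univ_nil.exists_card_eq (G := G) (b := b) (by rw [card_univ]; omega)
  have hP := length_le_of_isChain_of_nodup hpath hs.isChain hs.nodup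
  refine ⟨U, (U ∪ P.toFinset)ᶜ, disjoint_compl_right.mono_right (compl_le_compl subset_union_left),
    hU.ge, ?_, ?_⟩
  · have := card_union_le U P.toFinset
    have := P.toFinset_card_le
    rw [card_compl]
    omega
  · intro u hu w hw hadj
    have hw' := mem_compl.mp hw
    rcases hs.adj_mem u hu w hadj with hwU | hwP
    · exact hw' (mem_union_left _ hwU)
    · exact hw' (mem_union_right _ (List.mem_toFinset.mpr hwP))

end SimpleGraph

theorem stmt_17_general {V : Type*} [Fintype V] (G : SimpleGraph V)
    (β : ℝ)
    (n : ℕ) (hn : n = Fintype.card V)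
    (h : ℕ) (hh : h = n - 2 * ⌈β * n⌉₊)
    (hpath : ∀ (u v : V) (p : G.Walk u v), p.IsPath → p.support.length ≤ h) :
    ∃ U W : Finset V, Disjoint U W ∧
      ⌈β * n⌉₊ ≤ U.card ∧ ⌈β * n⌉₊ ≤ W.card ∧
      ∀ u ∈ U, ∀ w ∈ W, ¬G.Adj u w := by
  refine G.exists_disjoint_card_le_not_adj_of_support_length_le hpath ?_
  rcases isEmpty_or_nonempty V with _ | ⟨⟨v⟩⟩
  · simp [hn, hh]
  · -- the one-vertex path forces `h ≥ 1`, so the truncated subtraction in `hh` is exact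
    have h1 : 1 ≤ h := by simpa using hpath v v .nil .nil
    omega

theorem stmt_17 {V : Type*} [Fintype V] [DecidableEq V] (G : SimpleGraph V)
    (β : ℝ) (hβ : 0 < β) (hβ' : β < 1 / 2)
    (n : ℕ) (hn : n = Fintype.card V)
    (h : ℕ) (hh : h = n - 2 * ⌈β * n⌉₊)
    (hpath : ∀ (u v : V) (p : G.Walk u v), p.IsPath → p.support.length ≤ h) :
    ∃ U W : Finset V, Disjoint U W ∧
      ⌈β * n⌉₊ ≤ U.card ∧ ⌈β * n⌉₊ ≤ W.card ∧
      ∀ u ∈ U, ∀ w ∈ W, ¬G.Adj u w :=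
  stmt_17_general G β n hn h hh hpath
end
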